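/- arXiv:1704.00903 — 4 statements merged into one kernel-verified Lean document; each statement's English description precedes it below -/
import Mathlib

section
/- Let f be a unimodal Allee map on [0,M] with threshold A_f, carrying capacity K_f, peak B_f and maximum M_f, and let g be a unimodal Allee map on [0,M] with threshold A_g, carrying capacity K_g, peak B_g and maximum M_g, where M = max(M_f, M_g). Assume A_g < A_f, that f is differentiable on (B_f, M_f) with |f'(x)| < 1 for every x ∈ (B_f, M_f), that there exist m ≥ 1 and maps h₁, …, h_m, each equal to f or to g, such that (h₁ ∘ h₂ ∘ ⋯ ∘ h_m)(K_f) < A_f, and additionally that f(g(A_f)) ≠ A_f. Then for every x₀ ∈ [0,M], μ({ω : the sequence n ↦ X n ω converges to 0}) = 1 (taking b = M in the definition of the process). -/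
/-!
From every point of `[0, M]` some finite word in `f` and `g` leads below `A_g`. Indeed, the
`f`-orbit of a point of `[0, f B_f]` other than `A_f` either falls below `A_f`, after which it
decays to `0`, or stays above `A_f`; there `f` strictly decreases the distance to `K_f` (by the mean
value theorem on `[B_f, f B_f]`, and because `f B_f - K_f < K_f - B_f` below the peak), so the orbit
comes arbitrarily close to `K_f`, where the given composition sends it below `A_f` by continuity.
Every point is mapped into `[0, f B_f]` by `f`, and the only bad image `A_f` is escaped along
`f ∘ g`. Continuity and compactness of `[0, M]` give words of one common length `N`, and below
`A_g` both maps decrease the population, so an orbit that gets there dies out. Finally, the block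
of `N` coin flips after time `k N` is independent of the past and spells the word prescribed by the
current state with probability at least `min (p, 1 - p) ^ N`; hence almost surely some block does.
-/

open MeasureTheory ProbabilityTheory Filter Set

/-- `f` is a unimodal Allee map on `[0, b]` with threshold `A`, carrying capacity `K`
and peak `B` (its maximum is `f B`). -/
def IsUnimodalAlleeMap (b A K B : ℝ) (f : ℝ → ℝ) : Prop :=
  0 < A ∧ A < K ∧ K ≤ b ∧ A < B ∧ B < K ∧
  MapsTo f (Icc 0 b) (Icc 0 b) ∧
  ContinuousOn f (Icc 0 b) ∧
  StrictMonoOn f (Ioo 0 B) ∧ StrictAntiOn f (Ioo B b) ∧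
  f 0 = 0 ∧ f A = A ∧ f K = K ∧
  (∀ x ∈ Ioo 0 A ∪ Ioc K b, f x < x) ∧
  (∀ x ∈ Ioo A K, x < f x)

/-- The random orbit driven by a sequence of coin flips: apply `f` when the coin shows
`true` and `g` when it shows `false`. -/
def randOrbit (f g : ℝ → ℝ) (x₀ : ℝ) : ℕ → (ℕ → Bool) → ℝ
  | 0, _ => x₀
  | n + 1, ω => if ω n then f (randOrbit f g x₀ n ω) else g (randOrbit f g x₀ n ω)

open Topology
open scoped ENNReal Finset

theorem le_map_or_le_map_of_tendsto {α : Type*} [TopologicalSpace α] [LinearOrder α]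
    [OrderClosedTopology α] {f g : α → α} {y : ℕ → α} {L : α} (hy : Tendsto y atTop (𝓝 L))
    (hstep : ∀ n, y (n + 1) = f (y n) ∨ y (n + 1) = g (y n)) (hL : ∀ n, L ≤ y n)
    (hf : ContinuousAt f L) (hg : ContinuousAt g L) : L ≤ f L ∨ L ≤ g L := by
  by_contra! h
  obtain ⟨n, hfn, hgn⟩ := (hy.eventually ((hf.eventually (eventually_lt_nhds h.1)).and
    (hg.eventually (eventually_lt_nhds h.2)))).exists
  rcases hstep n with hn | hn
  exacts [(hL (n + 1)).not_gt (by rwa [hn]), (hL (n + 1)).not_gt (by rwa [hn])]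

theorem abs_sub_lt_of_abs_deriv_lt {φ : ℝ → ℝ} {u v : ℝ} (huv : u < v)
    (hc : ContinuousOn φ (Icc u v)) (hd : ∀ x ∈ Ioo u v, DifferentiableAt ℝ φ x)
    (hder : ∀ x ∈ Ioo u v, |deriv φ x| < 1) : |φ v - φ u| < v - u := by
  obtain ⟨c, hc, hslope⟩ :=
    exists_deriv_eq_slope φ huv hc fun x hx => (hd x hx).differentiableWithinAt
  have := hder c hc
  rwa [hslope, abs_div, abs_of_pos (sub_pos.2 huv), div_lt_one (sub_pos.2 huv)] at this

theorem IsCompact.exists_dist_iterate_lt {α : Type*} [PseudoMetricSpace α] {S : Set α}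
    (hS : IsCompact S) {φ : α → α} (hφ : ContinuousOn φ S) (hmaps : MapsTo φ S S) {p : α}
    (hp : ∀ x ∈ S, x ≠ p → dist (φ x) p < dist x p) {x : α} (hx : x ∈ S) {ε : ℝ} (hε : 0 < ε) :
    ∃ n, dist (φ^[n] x) p < ε := by
  by_contra! hfar
  set T := S ∩ {y | ε ≤ dist y p}
  have hd : Continuous (dist · p) := continuous_id.dist continuous_const
  have hT : IsCompact T := hS.inter_right (isClosed_le continuous_const hd)
  -- on the compact annulus `T` the decrease `dist y p - dist (φ y) p` has a positive minimum
  obtain ⟨y₀, hy₀, hmin⟩ := hT.exists_isMinOn (f := fun y => dist y p - dist (φ y) p)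
    ⟨x, hx, hfar 0⟩ (hd.continuousOn.sub (hd.comp_continuousOn (hφ.mono inter_subset_left)))
  have hη : 0 < dist y₀ p - dist (φ y₀) p := sub_pos.2 <| hp y₀ hy₀.1 fun h => by
    have hfar₀ : ε ≤ dist y₀ p := hy₀.2
    rw [h, dist_self] at hfar₀
    linarith
  have hdecr : ∀ n : ℕ, φ^[n] x ∈ S ∧
      dist (φ^[n] x) p ≤ dist x p - n * (dist y₀ p - dist (φ y₀) p) := by
    intro n
    induction n with
    | zero => simpa using hx
    | succ n ih =>
      rw [Function.iterate_succ_apply']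
      have : dist y₀ p - dist (φ y₀) p ≤ dist (φ^[n] x) p - dist (φ (φ^[n] x)) p :=
        hmin ⟨ih.1, hfar n⟩
      exact ⟨hmaps ih.1, by push_cast; linarith⟩
  obtain ⟨n, hn⟩ := exists_nat_gt (dist x p / (dist y₀ p - dist (φ y₀) p))
  rw [div_lt_iff₀ hη] at hn
  linarith [(hdecr n).2, hfar n]

namespace IsUnimodalAlleeMap

variable {b A K B : ℝ} {f : ℝ → ℝ}

theorem threshold_pos (hf : IsUnimodalAlleeMap b A K B f) : 0 < A := hf.1

theorem threshold_lt_capacity (hf : IsUnimodalAlleeMap b A K B f) : A < K := hf.2.1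

theorem capacity_le (hf : IsUnimodalAlleeMap b A K B f) : K ≤ b := hf.2.2.1

theorem threshold_lt_peak (hf : IsUnimodalAlleeMap b A K B f) : A < B := hf.2.2.2.1

theorem peak_lt_capacity (hf : IsUnimodalAlleeMap b A K B f) : B < K := hf.2.2.2.2.1

theorem mapsTo (hf : IsUnimodalAlleeMap b A K B f) : MapsTo f (Icc 0 b) (Icc 0 b) :=
  hf.2.2.2.2.2.1

theorem continuousOn (hf : IsUnimodalAlleeMap b A K B f) : ContinuousOn f (Icc 0 b) :=
  hf.2.2.2.2.2.2.1

theorem strictMonoOn (hf : IsUnimodalAlleeMap b A K B f) : StrictMonoOn f (Ioo 0 B) :=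
  hf.2.2.2.2.2.2.2.1

theorem strictAntiOn (hf : IsUnimodalAlleeMap b A K B f) : StrictAntiOn f (Ioo B b) :=
  hf.2.2.2.2.2.2.2.2.1

theorem map_zero (hf : IsUnimodalAlleeMap b A K B f) : f 0 = 0 := hf.2.2.2.2.2.2.2.2.2.1

theorem map_capacity (hf : IsUnimodalAlleeMap b A K B f) : f K = K :=
  hf.2.2.2.2.2.2.2.2.2.2.2.1

theorem map_lt_self (hf : IsUnimodalAlleeMap b A K B f) {x : ℝ} (hx : x ∈ Ioo 0 A) : f x < x :=
  hf.2.2.2.2.2.2.2.2.2.2.2.2.1 x (Or.inl hx)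

theorem lt_map_self (hf : IsUnimodalAlleeMap b A K B f) {x : ℝ} (hx : x ∈ Ioo A K) : x < f x :=
  hf.2.2.2.2.2.2.2.2.2.2.2.2.2 x hx

theorem peak_pos (hf : IsUnimodalAlleeMap b A K B f) : 0 < B :=
  hf.threshold_pos.trans hf.threshold_lt_peak

theorem peak_lt (hf : IsUnimodalAlleeMap b A K B f) : B < b :=
  hf.peak_lt_capacity.trans_le hf.capacity_le

theorem threshold_lt (hf : IsUnimodalAlleeMap b A K B f) : A < b :=
  hf.threshold_lt_capacity.trans_le hf.capacity_le

theorem continuousAt (hf : IsUnimodalAlleeMap b A K B f) {x : ℝ} (hx : x ∈ Ioo 0 b) :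
    ContinuousAt f x :=
  hf.continuousOn.continuousAt (Icc_mem_nhds hx.1 hx.2)

theorem map_le_map_peak (hf : IsUnimodalAlleeMap b A K B f) {x : ℝ} (hx : x ∈ Icc 0 b) :
    f x ≤ f B := by
  have hB : B ∈ Icc 0 b := ⟨hf.peak_pos.le, hf.peak_lt.le⟩
  have hmax : IsMaxOn f (Ioo 0 B ∪ Ioo B b) B := by
    rintro y (hy | hy)
    · refine ContinuousWithinAt.closure_le (s := Ioo y B) (by simp [closure_Ioo hy.2.ne, hy.2.le])
        continuousWithinAt_const ((hf.continuousOn B hB).mono fun z hz => ?_)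
        fun z hz => (hf.strictMonoOn hy ⟨hy.1.trans hz.1, hz.2⟩ hz.1).le
      exact ⟨(hy.1.trans hz.1).le, (hz.2.trans hf.peak_lt).le⟩
    · refine ContinuousWithinAt.closure_le (s := Ioo B y) (by simp [closure_Ioo hy.1.ne, hy.1.le])
        continuousWithinAt_const ((hf.continuousOn B hB).mono fun z hz => ?_)
        fun z hz => (hf.strictAntiOn ⟨hz.1, hz.2.trans hy.2⟩ hy hz.2).le
      exact ⟨(hf.peak_pos.trans hz.1).le, (hz.2.trans hy.2).le⟩
  have hcl : closure (Ioo 0 B ∪ Ioo B b) = Icc 0 b := by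
    rw [closure_union, closure_Ioo hf.peak_pos.ne, closure_Ioo hf.peak_lt.ne,
      Icc_union_Icc_eq_Icc hf.peak_pos.le hf.peak_lt.le]
  exact (hmax.closure (hcl ▸ hf.continuousOn)) (hcl ▸ hx)

theorem map_peak_le (hf : IsUnimodalAlleeMap b A K B f) : f B ≤ b :=
  (hf.mapsTo ⟨hf.peak_pos.le, hf.peak_lt.le⟩).2

theorem capacity_le_map_peak (hf : IsUnimodalAlleeMap b A K B f) : K ≤ f B :=
  hf.map_capacity ▸ hf.map_le_map_peak ⟨(hf.threshold_pos.trans hf.threshold_lt_capacity).le,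
    hf.capacity_le⟩

theorem map_mem_Icc_of_mem_Ico (hf : IsUnimodalAlleeMap b A K B f) {x : ℝ} (hx : x ∈ Ico 0 A) :
    f x ∈ Icc 0 x := by
  rcases hx.1.eq_or_lt with rfl | hpos
  · simp [hf.map_zero]
  · exact ⟨(hf.mapsTo ⟨hx.1, (hx.2.trans hf.threshold_lt).le⟩).1, (hf.map_lt_self ⟨hpos, hx.2⟩).le⟩

theorem mapsTo_inter_Iio (hf : IsUnimodalAlleeMap b A K B f) {c : ℝ} (hc : c ≤ A) :
    MapsTo f (Icc 0 b ∩ Iio c) (Icc 0 b ∩ Iio c) := fun _ hx =>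
  ⟨hf.mapsTo hx.1, (hf.map_mem_Icc_of_mem_Ico ⟨hx.1.1, hx.2.trans_le hc⟩).2.trans_lt hx.2⟩

theorem tendsto_zero_of_eq_or {b' A' K' B' : ℝ} {g : ℝ → ℝ} (hf : IsUnimodalAlleeMap b A K B f)
    (hg : IsUnimodalAlleeMap b' A' K' B' g) (hA : A' ≤ A) {y : ℕ → ℝ}
    (hy : ∀ n, y (n + 1) = f (y n) ∨ y (n + 1) = g (y n)) (h0 : y 0 ∈ Ico 0 A') :
    Tendsto y atTop (𝓝 0) := by
  have hstep : ∀ n, y n ∈ Ico 0 A' → y (n + 1) ∈ Icc 0 (y n) := fun n hn => by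
    rcases hy n with h | h <;> rw [h]
    exacts [hf.map_mem_Icc_of_mem_Ico ⟨hn.1, hn.2.trans_le hA⟩, hg.map_mem_Icc_of_mem_Ico hn]
  have hmem : ∀ n, y n ∈ Ico 0 A' := fun n => by
    induction n with
    | zero => exact h0
    | succ n ih => exact ⟨(hstep n ih).1, (hstep n ih).2.trans_lt ih.2⟩
  have hbdd : BddBelow (range y) := ⟨0, by rintro _ ⟨n, rfl⟩; exact (hmem n).1⟩
  have hlim := tendsto_atTop_ciInf (antitone_nat_of_succ_le fun n => (hstep n (hmem n)).2) hbdd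
  suffices ⨅ n, y n = 0 by rwa [this] at hlim
  by_contra hne
  set L := ⨅ n, y n
  have hL : L ∈ Ioo 0 A' :=
    ⟨(le_ciInf fun n => (hmem n).1).lt_of_ne' hne, (ciInf_le hbdd 0).trans_lt (hmem 0).2⟩
  have hLA : L ∈ Ioo 0 A := ⟨hL.1, hL.2.trans_le hA⟩
  rcases le_map_or_le_map_of_tendsto hlim hy (ciInf_le hbdd)
    (hf.continuousAt ⟨hL.1, hLA.2.trans hf.threshold_lt⟩)
    (hg.continuousAt ⟨hL.1, hL.2.trans hg.threshold_lt⟩) with h | h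
  exacts [h.not_gt (hf.map_lt_self hLA), h.not_gt (hg.map_lt_self hL)]

theorem exists_iterate_lt (hf : IsUnimodalAlleeMap b A K B f) {x c : ℝ} (hx : x ∈ Ico 0 A)
    (hc : 0 < c) : ∃ n, f^[n] x < c :=
  ((hf.tendsto_zero_of_eq_or hf le_rfl (y := fun n => f^[n] x)
    (fun n => .inl (Function.iterate_succ_apply' f n x)) hx).eventually
    (eventually_lt_nhds hc)).exists

theorem abs_map_sub_map_lt (hf : IsUnimodalAlleeMap b A K B f)
    (hdiff : ∀ x ∈ Ioo B (f B), DifferentiableAt ℝ f x) (hder : ∀ x ∈ Ioo B (f B), |deriv f x| < 1)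
    {u v : ℝ} (hu : u ∈ Icc B (f B)) (hv : v ∈ Icc B (f B)) (huv : u ≠ v) :
    |f u - f v| < |u - v| := by
  wlog h : u < v generalizing u v
  · rw [abs_sub_comm, abs_sub_comm u]
    exact this hv hu huv.symm (lt_of_le_of_ne (not_lt.1 h) huv.symm)
  rw [abs_sub_comm, abs_sub_comm u, abs_of_pos (sub_pos.2 h)]
  refine abs_sub_lt_of_abs_deriv_lt h (hf.continuousOn.mono (Icc_subset_Icc ?_ ?_))
    (fun x hx => hdiff x ⟨hu.1.trans_lt hx.1, hx.2.trans_le hv.2⟩)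
    (fun x hx => hder x ⟨hu.1.trans_lt hx.1, hx.2.trans_le hv.2⟩)
  exacts [hf.peak_pos.le.trans hu.1, hv.2.trans hf.map_peak_le]

theorem map_peak_sub_capacity_lt (hf : IsUnimodalAlleeMap b A K B f)
    (hdiff : ∀ x ∈ Ioo B (f B), DifferentiableAt ℝ f x)
    (hder : ∀ x ∈ Ioo B (f B), |deriv f x| < 1) : f B - K < K - B := by
  have := hf.abs_map_sub_map_lt hdiff hder ⟨le_rfl, (hf.peak_lt_capacity.le.trans
    hf.capacity_le_map_peak)⟩ ⟨hf.peak_lt_capacity.le, hf.capacity_le_map_peak⟩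
    hf.peak_lt_capacity.ne
  rw [hf.map_capacity, abs_of_neg (sub_neg.2 hf.peak_lt_capacity)] at this
  linarith [le_abs_self (f B - K)]

theorem abs_map_sub_capacity_lt (hf : IsUnimodalAlleeMap b A K B f)
    (hdiff : ∀ x ∈ Ioo B (f B), DifferentiableAt ℝ f x) (hder : ∀ x ∈ Ioo B (f B), |deriv f x| < 1)
    {x : ℝ} (hx : x ∈ Ioc A (f B)) (hxK : x ≠ K) : |f x - K| < |x - K| := by
  rcases lt_or_ge x B with hxB | hBx
  · have hK : x < K := hxB.trans hf.peak_lt_capacity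
    have hup := hf.lt_map_self ⟨hx.1, hK⟩
    have hle := hf.map_le_map_peak ⟨(hf.threshold_pos.trans hx.1).le, hx.2.trans hf.map_peak_le⟩
    rw [abs_of_neg (sub_neg.2 hK), abs_sub_lt_iff]
    constructor <;> linarith [hf.map_peak_sub_capacity_lt hdiff hder]
  · have := hf.abs_map_sub_map_lt hdiff hder ⟨hBx, hx.2⟩
      ⟨hf.peak_lt_capacity.le, hf.capacity_le_map_peak⟩ hxK
    rwa [hf.map_capacity] at this

theorem mapsTo_Icc_map_peak (hf : IsUnimodalAlleeMap b A K B f)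
    (hdiff : ∀ x ∈ Ioo B (f B), DifferentiableAt ℝ f x) (hder : ∀ x ∈ Ioo B (f B), |deriv f x| < 1)
    {c : ℝ} (hc : c ∈ Ioc A B) : MapsTo f (Icc c (f B)) (Icc c (f B)) := by
  intro x hx
  refine ⟨?_, hf.map_le_map_peak ⟨(hf.threshold_pos.trans hc.1).le.trans hx.1,
    hx.2.trans hf.map_peak_le⟩⟩
  rcases eq_or_ne x K with rfl | hxK
  · rw [hf.map_capacity]
    exact hx.1
  · have := hf.abs_map_sub_capacity_lt hdiff hder ⟨hc.1.trans_le hx.1, hx.2⟩ hxK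
    have hKc : |x - K| ≤ K - c := abs_le.2 ⟨by linarith [hx.1],
      by linarith [hx.2, hc.2, hf.map_peak_sub_capacity_lt hdiff hder]⟩
    linarith [neg_abs_le (f x - K)]

theorem exists_abs_iterate_sub_capacity_lt (hf : IsUnimodalAlleeMap b A K B f)
    (hdiff : ∀ x ∈ Ioo B (f B), DifferentiableAt ℝ f x) (hder : ∀ x ∈ Ioo B (f B), |deriv f x| < 1)
    {x ε : ℝ} (hx : x ∈ Ioc A (f B)) (hε : 0 < ε) : ∃ n, |f^[n] x - K| < ε := by
  have hc : min x B ∈ Ioc A B := ⟨lt_min hx.1 hf.threshold_lt_peak, min_le_right _ _⟩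
  have hS : Icc (min x B) (f B) ⊆ Ioc A (f B) := fun y hy => ⟨hc.1.trans_le hy.1, hy.2⟩
  simp only [← Real.dist_eq] at hε ⊢
  refine isCompact_Icc.exists_dist_iterate_lt
    (hf.continuousOn.mono fun y hy => ⟨(hf.threshold_pos.trans (hS hy).1).le,
      hy.2.trans hf.map_peak_le⟩)
    (hf.mapsTo_Icc_map_peak hdiff hder hc) (fun y hy hyK => ?_) ⟨min_le_left _ _, hx.2⟩ hε
  simpa only [Real.dist_eq] using hf.abs_map_sub_capacity_lt hdiff hder (hS hy) hyK

end IsUnimodalAlleeMap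

def Reachable {α : Type*} (f g : α → α) : α → α → Prop :=
  Relation.ReflTransGen fun x y => y = f x ∨ y = g x

section Reachable

variable {α : Type*} {f g : α → α}

theorem reachable_iterate (x : α) (n : ℕ) : Reachable f g x (f^[n] x) := by
  induction n with
  | zero => exact .refl
  | succ n ih => exact ih.tail (.inl (Function.iterate_succ_apply' f n x))

theorem reachable_foldr {l : List (α → α)} (hl : ∀ h ∈ l, h = f ∨ h = g) (x : α) :
    Reachable f g x (l.foldr (· ∘ ·) id x) := by
  induction l with
  | nil => exact .refl
  | cons h t ih =>
    refine (ih fun h' hh' => hl h' (List.mem_cons_of_mem _ hh')).tail ?_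
    rcases hl h List.mem_cons_self with rfl | rfl
    exacts [.inl rfl, .inr rfl]

end Reachable

section RandOrbit

variable {f g : ℝ → ℝ}

theorem randOrbit_succ_eq_or (x : ℝ) (n : ℕ) (ω : ℕ → Bool) :
    randOrbit f g x (n + 1) ω = f (randOrbit f g x n ω) ∨
      randOrbit f g x (n + 1) ω = g (randOrbit f g x n ω) := by
  simp only [randOrbit]
  cases ω n <;> simp

theorem dependsOn_randOrbit (x : ℝ) (n : ℕ) : DependsOn (randOrbit f g x n) (Iio n) := by
  intro ω ω' h
  induction n with
  | zero => rfl
  | succ n ih =>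
    simp only [randOrbit, h n (by simp), ih fun i hi => h i (Nat.lt_succ_of_lt hi)]

theorem randOrbit_add (x : ℝ) (m n : ℕ) (ω : ℕ → Bool) :
    randOrbit f g x (m + n) ω = randOrbit f g (randOrbit f g x m ω) n (fun i => ω (m + i)) := by
  induction n with
  | zero => rfl
  | succ n ih =>
    show randOrbit f g x (m + n + 1) ω = _
    simp only [randOrbit, ih]

theorem mapsTo_randOrbit {S : Set ℝ} (hf : MapsTo f S S) (hg : MapsTo g S S) (n : ℕ)
    (ω : ℕ → Bool) : MapsTo (randOrbit f g · n ω) S S := by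
  induction n with
  | zero => exact mapsTo_id S
  | succ n ih =>
    intro x hx
    simp only [randOrbit]
    split
    exacts [hf (ih hx), hg (ih hx)]

theorem continuousOn_randOrbit {S : Set ℝ} (hfS : MapsTo f S S) (hgS : MapsTo g S S)
    (hf : ContinuousOn f S) (hg : ContinuousOn g S) (n : ℕ) (ω : ℕ → Bool) :
    ContinuousOn (randOrbit f g · n ω) S := by
  induction n with
  | zero => exact continuousOn_id
  | succ n ih =>
    simp only [randOrbit]
    split
    exacts [hf.comp ih (mapsTo_randOrbit hfS hgS n ω), hg.comp ih (mapsTo_randOrbit hfS hgS n ω)]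

theorem reachable_randOrbit (x : ℝ) (n : ℕ) (ω : ℕ → Bool) :
    Reachable f g x (randOrbit f g x n ω) := by
  induction n with
  | zero => exact .refl
  | succ n ih => exact ih.tail (randOrbit_succ_eq_or x n ω)

theorem Reachable.exists_randOrbit_eq {x y : ℝ} (h : Reachable f g x y) :
    ∃ n ω, randOrbit f g x n ω = y := by
  induction h with
  | refl => exact ⟨0, fun _ => true, rfl⟩
  | tail _ hyz ih =>
    obtain ⟨n, ω, rfl⟩ := ih
    have hω (b : Bool) : randOrbit f g x n (Function.update ω n b) = randOrbit f g x n ω :=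
      dependsOn_randOrbit x n fun i hi => Function.update_of_ne (ne_of_lt hi) _ _
    rcases hyz with rfl | rfl
    · exact ⟨n + 1, Function.update ω n true, by simp [randOrbit, hω]⟩
    · exact ⟨n + 1, Function.update ω n false, by simp [randOrbit, hω]⟩

theorem IsCompact.exists_forall_randOrbit_mem {K U : Set ℝ} (hK : IsCompact K) (hU : IsOpen U)
    (hfK : MapsTo f K K) (hgK : MapsTo g K K) (hf : ContinuousOn f K) (hg : ContinuousOn g K)
    (hfU : MapsTo f (K ∩ U) (K ∩ U)) (hgU : MapsTo g (K ∩ U) (K ∩ U))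
    (h : ∀ x ∈ K, ∃ n ω, randOrbit f g x n ω ∈ U) :
    ∃ N, ∀ x ∈ K, ∃ ω, randOrbit f g x N ω ∈ U := by
  choose! n ω hn using h
  obtain ⟨t, htK, hcover⟩ := hK.elim_nhds_subcover
    (fun x => {y | y ∈ K → randOrbit f g y (n x) (ω x) ∈ U}) fun x hx =>
      mem_nhdsWithin_iff_eventually.1 <| (continuousOn_randOrbit hfK hgK hf hg (n x) (ω x) x hx)
        (hU.mem_nhds (hn x hx))
  refine ⟨t.sup n, fun y hy => ?_⟩
  obtain ⟨x, hxt, hyx⟩ := mem_iUnion₂.1 (hcover hy)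
  refine ⟨ω x, ?_⟩
  rw [← Nat.add_sub_cancel' (Finset.le_sup (f := n) hxt), randOrbit_add]
  exact (mapsTo_randOrbit hfU hgU _ _ ⟨mapsTo_randOrbit hfK hgK _ _ hy, hyx hy⟩).2

end RandOrbit

section Deterministic

variable {M Af Kf Bf Ag Kg Bg : ℝ} {f g : ℝ → ℝ}

theorem exists_reachable_lt_of_near_capacity (hf : IsUnimodalAlleeMap M Af Kf Bf f)
    (hg : IsUnimodalAlleeMap M Ag Kg Bg g)
    (hcomp : ∃ l : List (ℝ → ℝ), l ≠ [] ∧ (∀ h ∈ l, h = f ∨ h = g) ∧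
      l.foldr (· ∘ ·) id Kf < Af) {c : ℝ} (hc : 0 < c) :
    ∃ δ > 0, ∀ z ∈ Icc 0 M, |z - Kf| < δ → ∃ y, Reachable f g z y ∧ y < c := by
  obtain ⟨l, -, hl, hlK⟩ := hcomp
  obtain ⟨n, ω, hnω⟩ := (reachable_foldr hl Kf).exists_randOrbit_eq
  have hK : Kf ∈ Icc 0 M :=
    ⟨(hf.threshold_pos.trans hf.threshold_lt_capacity).le, hf.capacity_le⟩
  obtain ⟨δ, hδ, hball⟩ := Metric.mem_nhdsWithin_iff.1 <|
    continuousOn_randOrbit hf.mapsTo hg.mapsTo hf.continuousOn hg.continuousOn n ω Kf hK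
      (Iio_mem_nhds (hnω ▸ hlK))
  refine ⟨δ, hδ, fun z hz hzK => ?_⟩
  have hlt : randOrbit f g z n ω < Af := hball ⟨by rwa [Metric.mem_ball, Real.dist_eq], hz⟩
  obtain ⟨m, hm⟩ := hf.exists_iterate_lt ⟨(mapsTo_randOrbit hf.mapsTo hg.mapsTo n ω hz).1, hlt⟩ hc
  exact ⟨_, (reachable_randOrbit z n ω).trans (reachable_iterate _ m), hm⟩

theorem exists_reachable_lt_of_ne_threshold (hf : IsUnimodalAlleeMap M Af Kf Bf f)
    (hg : IsUnimodalAlleeMap M Ag Kg Bg g)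
    (hdiff : ∀ x ∈ Ioo Bf (f Bf), DifferentiableAt ℝ f x)
    (hder : ∀ x ∈ Ioo Bf (f Bf), |deriv f x| < 1)
    (hcomp : ∃ l : List (ℝ → ℝ), l ≠ [] ∧ (∀ h ∈ l, h = f ∨ h = g) ∧
      l.foldr (· ∘ ·) id Kf < Af) {c : ℝ} (hc : 0 < c) {y : ℝ} (hy : y ∈ Icc 0 (f Bf))
    (hyA : y ≠ Af) : ∃ z, Reachable f g y z ∧ z < c := by
  rcases hyA.lt_or_gt with hlt | hgt
  · obtain ⟨n, hn⟩ := hf.exists_iterate_lt ⟨hy.1, hlt⟩ hc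
    exact ⟨_, reachable_iterate y n, hn⟩
  · obtain ⟨δ, hδ, hnear⟩ := exists_reachable_lt_of_near_capacity hf hg hcomp hc
    obtain ⟨n, hn⟩ := hf.exists_abs_iterate_sub_capacity_lt hdiff hder ⟨hgt, hy.2⟩ hδ
    obtain ⟨z, hz, hzc⟩ :=
      hnear _ (hf.mapsTo.iterate n ⟨hy.1, hy.2.trans hf.map_peak_le⟩) hn
    exact ⟨z, (reachable_iterate y n).trans hz, hzc⟩

theorem exists_reachable_lt (hf : IsUnimodalAlleeMap M Af Kf Bf f)
    (hg : IsUnimodalAlleeMap M Ag Kg Bg g)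
    (hdiff : ∀ x ∈ Ioo Bf (f Bf), DifferentiableAt ℝ f x)
    (hder : ∀ x ∈ Ioo Bf (f Bf), |deriv f x| < 1)
    (hcomp : ∃ l : List (ℝ → ℝ), l ≠ [] ∧ (∀ h ∈ l, h = f ∨ h = g) ∧
      l.foldr (· ∘ ·) id Kf < Af) (hfg : f (g Af) ≠ Af) {x : ℝ} (hx : x ∈ Icc 0 M) :
    ∃ y, Reachable f g x y ∧ y < Ag := by
  have key : ∀ z ∈ Icc 0 M, f z ≠ Af → ∃ y, Reachable f g z y ∧ y < Ag := fun z hz hfz => by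
    obtain ⟨y, hy, hyc⟩ := exists_reachable_lt_of_ne_threshold hf hg hdiff hder hcomp
      hg.threshold_pos ⟨(hf.mapsTo hz).1, hf.map_le_map_peak hz⟩ hfz
    exact ⟨y, .head (.inl rfl) hy, hyc⟩
  by_cases hfx : f x = Af
  · obtain ⟨y, hy, hyc⟩ := key (g (f x)) (hg.mapsTo (hf.mapsTo hx)) (hfx ▸ hfg)
    exact ⟨y, .head (.inl rfl) (.head (.inr rfl) hy), hyc⟩
  · exact key x hx hfx

end Deterministic

section Probability

theorem ProbabilityTheory.IndepFun.measure_inter_ne_le {Ω α β : Type*} [MeasurableSpace Ω]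
    {μ : Measure Ω} [IsFiniteMeasure μ] [MeasurableSpace α] [MeasurableSpace β] [Countable α]
    [Countable β] [MeasurableSingletonClass α] [MeasurableSingletonClass β] {X : Ω → α}
    {Y : Ω → β} (hXY : IndepFun X Y μ) (hX : Measurable X) (hY : Measurable Y) {δ : ℝ≥0∞}
    (hδ : ∀ y, δ ≤ μ (Y ⁻¹' {y})) (s : Set α) (F : α → β) :
    μ (X ⁻¹' s ∩ {ω | Y ω ≠ F (X ω)}) ≤ (1 - δ) * μ (X ⁻¹' s) := by
  have hXY' : Measurable fun ω => (X ω, Y ω) := hX.prodMk hY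
  have hhit : δ * μ (X ⁻¹' s) ≤ μ (X ⁻¹' s ∩ {ω | Y ω = F (X ω)}) := by
    change _ ≤ μ ((fun ω => (X ω, Y ω)) ⁻¹' {q | q.1 ∈ s ∧ q.2 = F q.1})
    rw [← Measure.map_apply hXY' .of_discrete,
      (indepFun_iff_map_prod_eq_prod_map_map hX.aemeasurable hY.aemeasurable).1 hXY,
      Measure.prod_apply .of_discrete, ← Measure.map_apply hX .of_discrete,
      ← lintegral_indicator_const .of_discrete]
    refine lintegral_mono fun a => ?_
    by_cases ha : a ∈ s
    · rw [indicator_of_mem ha, Measure.map_apply hY .of_discrete]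
      convert hδ (F a) using 3
      ext
      simp [ha]
    · simp [ha]
  have hsplit : μ (X ⁻¹' s ∩ {ω | Y ω = F (X ω)}) + μ (X ⁻¹' s ∩ {ω | Y ω ≠ F (X ω)}) =
      μ (X ⁻¹' s) :=
    measure_inter_add_sdiff _ (hXY' (.of_discrete : MeasurableSet {q : α × β | q.2 = F q.1}))
  calc μ (X ⁻¹' s ∩ {ω | Y ω ≠ F (X ω)})
      = μ (X ⁻¹' s) - μ (X ⁻¹' s ∩ {ω | Y ω = F (X ω)}) :=
        ENNReal.eq_sub_of_add_eq (measure_ne_top _ _) (by rw [add_comm]; exact hsplit)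
    _ ≤ μ (X ⁻¹' s) - δ * μ (X ⁻¹' s) := tsub_le_tsub_left hhit _
    _ = (1 - δ) * μ (X ⁻¹' s) := by rw [ENNReal.sub_mul fun _ _ => measure_ne_top _ _, one_mul]

variable {μ : Measure (ℕ → Bool)} {δ : ℝ≥0∞}

theorem min_le_measure_coord_eq [IsProbabilityMeasure μ] {p : ℝ}
    (hcoin : ∀ n, μ {ω | ω n = true} = ENNReal.ofReal p) (n : ℕ) (b : Bool) :
    min (ENNReal.ofReal p) (1 - ENNReal.ofReal p) ≤ μ {ω | ω n = b} := by
  cases b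
  · rw [show {ω : ℕ → Bool | ω n = false} = {ω | ω n = true}ᶜ by ext; simp,
      prob_compl_eq_one_sub (measurableSet_eq_fun (measurable_pi_apply n) measurable_const),
      hcoin]
    exact min_le_right _ _
  · exact hcoin n ▸ min_le_left _ _

theorem le_measure_restrict_eq (hindep : iIndepFun (fun n ω => ω n) μ)
    (hδ : ∀ n b, δ ≤ μ {ω | ω n = b}) (T : Finset ℕ) (u : T → Bool) :
    δ ^ #T ≤ μ {ω | T.restrict ω = u} := by
  have hset : {ω | T.restrict ω = u} =
      ⋂ j ∈ (Finset.univ : Finset T), (fun ω : ℕ → Bool => ω j) ⁻¹' {u j} := by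
    ext
    simp [funext_iff]
  rw [hset, (hindep.precomp Subtype.val_injective).measure_inter_preimage_eq_mul Finset.univ
    fun _ _ => .of_discrete]
  calc δ ^ #T = ∏ _j : T, δ := by simp
    _ ≤ _ := Finset.prod_le_prod' fun j _ => hδ j (u j)

theorem measure_inter_restrict_ne_le [IsProbabilityMeasure μ]
    (hindep : iIndepFun (fun n ω => ω n) μ) (hδ : ∀ n b, δ ≤ μ {ω | ω n = b}) {S T : Finset ℕ}
    (hST : Disjoint S T) {A : Set (ℕ → Bool)} (hA : DependsOn (· ∈ A) S)
    {ψ : (ℕ → Bool) → T → Bool} (hψ : DependsOn ψ S) :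
    μ (A ∩ {ω | T.restrict ω ≠ ψ ω}) ≤ (1 - δ ^ #T) * μ A := by
  have hXY : IndepFun S.restrict T.restrict μ :=
    hindep.indepFun_finset S T hST fun i => measurable_pi_apply i
  have hS : ∀ ω ω' : ℕ → Bool, S.restrict ω = S.restrict ω' → ∀ i ∈ (S : Set ℕ), ω i = ω' i :=
    fun ω ω' h i hi => congrFun h ⟨i, hi⟩
  have hAX : A = S.restrict ⁻¹' (S.restrict '' A) := by
    refine (subset_preimage_image _ _).antisymm ?_
    rintro ω ⟨ω', hω', hωω'⟩
    exact cast (hA (hS _ _ hωω')) hω'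
  have hψX : Function.FactorsThrough ψ S.restrict := fun ω ω' h => hψ (hS ω ω' h)
  have hψF : ∀ ω, ψ ω = Function.extend S.restrict ψ (fun _ _ => true) (S.restrict ω) :=
    fun ω => (hψX.extend_apply _ ω).symm
  simp_rw [hψF]
  rw [hAX]
  exact hXY.measure_inter_ne_le (Finset.measurable_restrict S) (Finset.measurable_restrict T)
    (le_measure_restrict_eq hindep hδ T) _ _

theorem ae_exists_block_eq [IsProbabilityMeasure μ] (hindep : iIndepFun (fun n ω => ω n) μ)
    (hδ : ∀ n b, δ ≤ μ {ω | ω n = b}) (hδ0 : δ ≠ 0) (N : ℕ)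
    {φ : ℕ → (ℕ → Bool) → ℕ → Bool} (hφ : ∀ k, DependsOn (φ k) (Iio (k * N))) :
    ∀ᵐ ω ∂μ, ∃ k, ∀ j ∈ Ico (k * N) (k * N + N), ω j = φ k ω j := by
  set block : ℕ → Finset ℕ := fun k => Finset.Ico (k * N) (k * N + N)
  have hblock : ∀ k ω, (block k).restrict ω = (block k).restrict (φ k ω) ↔
      ∀ j ∈ Ico (k * N) (k * N + N), ω j = φ k ω j := by
    simp [block, funext_iff]
  set miss : ℕ → Set (ℕ → Bool) :=
    fun k => {ω | ∀ l < k, ¬ ∀ j ∈ Ico (l * N) (l * N + N), ω j = φ l ω j}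
  have hdep : ∀ k, DependsOn (· ∈ miss k) (Finset.range (k * N) : Set ℕ) := by
    intro k ω ω' h
    simp only [Finset.coe_range, mem_Iio] at h
    refine propext (forall₂_congr fun l hl => not_congr (forall₂_congr fun j hj => ?_))
    have hlk : l * N + N ≤ k * N := by nlinarith
    rw [h j (hj.2.trans_le hlk), hφ l fun i hi => h i (hi.trans_le (by nlinarith))]
  have hstep : ∀ k, μ (miss (k + 1)) ≤ (1 - δ ^ N) * μ (miss k) := by
    intro k
    have hmiss : miss (k + 1) =
        miss k ∩ {ω | (block k).restrict ω ≠ (block k).restrict (φ k ω)} := by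
      ext ω
      exact Nat.forall_lt_succ_right.trans (and_congr Iff.rfl (not_congr (hblock k ω)).symm)
    rw [hmiss]
    convert measure_inter_restrict_ne_le hindep hδ (Finset.disjoint_left.2 fun i hi hi' => by
      simp only [block, Finset.mem_range, Finset.mem_Ico] at hi hi'; omega) (hdep k)
      (ψ := fun ω => (block k).restrict (φ k ω))
      (fun ω ω' h => by simp only [hφ k (by simpa using h)]) using 3
    simp [block]
  have hbound : ∀ k, μ (miss k) ≤ (1 - δ ^ N) ^ k := by
    intro k
    induction k with
    | zero => simpa using prob_le_one
    | succ k ih => exact (hstep k).trans (by rw [pow_succ']; gcongr)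
  rw [ae_iff]
  refine nonpos_iff_eq_zero.1 (ge_of_tendsto' (ENNReal.tendsto_pow_atTop_nhds_zero_of_lt_one
    (ENNReal.sub_lt_self ENNReal.one_ne_top one_ne_zero (pow_ne_zero N hδ0))) fun k => ?_)
  refine (measure_mono fun ω hω => ?_).trans (hbound k)
  exact fun l _ hl => hω ⟨l, hl⟩

end Probability

section Extinction

variable {M Af Kf Bf Ag Kg Bg : ℝ} {f g : ℝ → ℝ}

theorem tendsto_randOrbit_zero (hf : IsUnimodalAlleeMap M Af Kf Bf f)
    (hg : IsUnimodalAlleeMap M Ag Kg Bg g) (hA : Ag ≤ Af) {x₀ : ℝ} {ω : ℕ → Bool} {m : ℕ}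
    (hm : randOrbit f g x₀ m ω ∈ Ico 0 Ag) :
    Tendsto (fun n => randOrbit f g x₀ n ω) atTop (𝓝 0) :=
  (tendsto_add_atTop_iff_nat m).1 <| hf.tendsto_zero_of_eq_or hg hA
    (fun n => by rw [Nat.add_right_comm]; exact randOrbit_succ_eq_or x₀ (n + m) ω)
    (by simpa using hm)

theorem ae_tendsto_randOrbit_zero (hf : IsUnimodalAlleeMap M Af Kf Bf f)
    (hg : IsUnimodalAlleeMap M Ag Kg Bg g) (hA : Ag ≤ Af) {N : ℕ} {w : ℝ → ℕ → Bool}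
    (hw : ∀ x ∈ Icc 0 M, randOrbit f g x N (w x) < Ag) {μ : Measure (ℕ → Bool)}
    [IsProbabilityMeasure μ] (hindep : iIndepFun (fun n ω => ω n) μ) {δ : ℝ≥0∞}
    (hδ : ∀ n b, δ ≤ μ {ω | ω n = b}) (hδ0 : δ ≠ 0) {x₀ : ℝ} (hx₀ : x₀ ∈ Icc 0 M) :
    ∀ᵐ ω ∂μ, Tendsto (fun n => randOrbit f g x₀ n ω) atTop (𝓝 0) := by
  filter_upwards [ae_exists_block_eq hindep hδ hδ0 N
    (φ := fun k ω j => w (randOrbit f g x₀ (k * N) ω) (j - k * N))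
    fun k ω ω' h => by simp only [dependsOn_randOrbit x₀ (k * N) h]] with ω ⟨k, hk⟩
  set x := randOrbit f g x₀ (k * N) ω
  have hx : x ∈ Icc 0 M := mapsTo_randOrbit hf.mapsTo hg.mapsTo _ ω hx₀
  have hhit : randOrbit f g x₀ (k * N + N) ω = randOrbit f g x N (w x) := by
    rw [randOrbit_add]
    exact dependsOn_randOrbit x N fun i hi => by
      simpa using hk (k * N + i) ⟨by omega, by simpa using hi⟩
  exact tendsto_randOrbit_zero hf hg hA
    ⟨(mapsTo_randOrbit hf.mapsTo hg.mapsTo _ ω hx₀).1, hhit ▸ hw x hx⟩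

end Extinction

theorem stmt10_general
    (M Af Kf Bf Ag Kg Bg : ℝ)
    (f g : ℝ → ℝ)
    (hf : IsUnimodalAlleeMap M Af Kf Bf f) (hg : IsUnimodalAlleeMap M Ag Kg Bg g)
    (hA : Ag < Af)
    -- `f` is differentiable with `|f'| < 1` on `(B_f, M_f)`
    (hdiff : ∀ x ∈ Ioo Bf (f Bf), DifferentiableAt ℝ f x)
    (hder : ∀ x ∈ Ioo Bf (f Bf), |deriv f x| < 1)
    -- some composition of the maps `f`, `g` sends `K_f` below `A_f`
    (hcomp : ∃ l : List (ℝ → ℝ), l ≠ [] ∧ (∀ h ∈ l, h = f ∨ h = g) ∧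
      l.foldr (· ∘ ·) id Kf < Af)
    (hfg : f (g Af) ≠ Af)
    (p : ℝ) (hp : p ∈ Ioo (0 : ℝ) 1)
    (μ : Measure (ℕ → Bool)) [IsProbabilityMeasure μ]
    (hindep : iIndepFun (fun n ω => ω n) μ)
    (hcoin : ∀ n, μ {ω | ω n = true} = ENNReal.ofReal p) :
    ∀ x₀ ∈ Icc (0 : ℝ) M,
      μ {ω | Tendsto (fun n => randOrbit f g x₀ n ω) atTop (nhds 0)} = 1 := by
  intro x₀ hx₀
  obtain ⟨N, hN⟩ := isCompact_Icc.exists_forall_randOrbit_mem isOpen_Iio hf.mapsTo hg.mapsTo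
    hf.continuousOn hg.continuousOn (hf.mapsTo_inter_Iio hA.le) (hg.mapsTo_inter_Iio le_rfl)
    fun x hx => by
      obtain ⟨y, hy, hyA⟩ := exists_reachable_lt hf hg hdiff hder hcomp hfg hx
      obtain ⟨n, ω, rfl⟩ := hy.exists_randOrbit_eq
      exact ⟨n, ω, hyA⟩
  choose! w hw using hN
  have hδ0 : min (ENNReal.ofReal p) (1 - ENNReal.ofReal p) ≠ 0 :=
    (lt_min (ENNReal.ofReal_pos.2 hp.1) (tsub_pos_of_lt (ENNReal.ofReal_lt_one.2 hp.2))).ne'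
  have hae := ae_tendsto_randOrbit_zero hf hg hA.le hw hindep (min_le_measure_coord_eq hcoin)
    hδ0 hx₀
  exact (measure_congr (ae_eq_univ.2 (ae_iff.1 hae))).trans measure_univ

theorem stmt10
    (M Af Kf Bf Ag Kg Bg : ℝ)
    (f g : ℝ → ℝ)
    (hM : M = max (f Bf) (g Bg))
    (hf : IsUnimodalAlleeMap M Af Kf Bf f) (hg : IsUnimodalAlleeMap M Ag Kg Bg g)
    (hA : Ag < Af)
    -- `f` is differentiable with `|f'| < 1` on `(B_f, M_f)`
    (hdiff : ∀ x ∈ Ioo Bf (f Bf), DifferentiableAt ℝ f x)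
    (hder : ∀ x ∈ Ioo Bf (f Bf), |deriv f x| < 1)
    -- some composition of the maps `f`, `g` sends `K_f` below `A_f`
    (hcomp : ∃ l : List (ℝ → ℝ), l ≠ [] ∧ (∀ h ∈ l, h = f ∨ h = g) ∧
      l.foldr (· ∘ ·) id Kf < Af)
    (hfg : f (g Af) ≠ Af)
    (p : ℝ) (hp : p ∈ Ioo (0 : ℝ) 1)
    (μ : Measure (ℕ → Bool)) [IsProbabilityMeasure μ]
    (hindep : iIndepFun (fun n ω => ω n) μ)
    (hcoin : ∀ n, μ {ω | ω n = true} = ENNReal.ofReal p) :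
    ∀ x₀ ∈ Icc (0 : ℝ) M,
      μ {ω | Tendsto (fun n => randOrbit f g x₀ n ω) atTop (nhds 0)} = 1 :=
  stmt10_general M Af Kf Bf Ag Kg Bg f g hf hg hA hdiff hder hcomp hfg p hp μ hindep hcoin
end

section
/- Let f be a strictly increasing Allee map on [0,b] with threshold A and carrying capacity K. Then for every x ∈ [0, A), the sequence of iterates (f^[n](x))_{n≥0} is antitone (non-increasing) and converges to 0. -/
open Filter Set

/-- `f` is a strictly increasing Allee map on `[0, b]` with threshold `A` and
carrying capacity `K`. -/
def IsIncAlleeMap (b A K : ℝ) (f : ℝ → ℝ) : Prop :=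
  0 < A ∧ A < K ∧ K < b ∧
  MapsTo f (Icc 0 b) (Icc 0 b) ∧
  ContinuousOn f (Icc 0 b) ∧
  StrictMonoOn f (Icc 0 b) ∧
  f 0 = 0 ∧ f A = A ∧ f K = K ∧
  (∀ x ∈ Ioo 0 A ∪ Ioc K b, f x < x) ∧
  (∀ x ∈ Ioo A K, x < f x)

theorem stmt13
    (b A K : ℝ) (hb : 0 < b)
    (f : ℝ → ℝ) (hf : IsIncAlleeMap b A K f) :
    ∀ x ∈ Ico (0 : ℝ) A,
      Antitone (fun n => f^[n] x) ∧
      Tendsto (fun n => f^[n] x) atTop (nhds 0) := by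
  obtain ⟨hA, hAK, hKb, hmap, hcont, hmono, hf0, hfA, hfK, hlt, hgt⟩ := hf
  intro x hx
  obtain ⟨hx0, hxA⟩ := hx
  have hAb : A < b := hAK.trans hKb
  have key : ∀ y ∈ Ico (0:ℝ) A, f y ∈ Ico (0:ℝ) A ∧ f y ≤ y := by
    intro y hy
    rcases eq_or_lt_of_le hy.1 with h0 | h0
    · simp [← h0, hf0, hA]
    · have hyb : y ∈ Icc 0 b := ⟨hy.1, (hy.2.trans hAb).le⟩
      have hfy0 : 0 ≤ f y := (hmap hyb).1
      have hfyy : f y < y := hlt y (Or.inl ⟨h0, hy.2⟩)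
      exact ⟨⟨hfy0, hfyy.trans hy.2⟩, hfyy.le⟩
  have hiter : ∀ n, f^[n] x ∈ Ico (0:ℝ) A := by
    intro n; induction n with
    | zero => exact ⟨hx0, hxA⟩
    | succ n ih => rw [Function.iterate_succ_apply']; exact (key _ ih).1
  have hanti : Antitone (fun n => f^[n] x) := by
    apply antitone_nat_of_succ_le
    intro n
    rw [Function.iterate_succ_apply']
    exact (key _ (hiter n)).2
  refine ⟨hanti, ?_⟩
  have hbdd : BddBelow (range fun n => f^[n] x) := by
    refine ⟨0, ?_⟩; rintro y ⟨n, rfl⟩; exact (hiter n).1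
  have htend : Tendsto (fun n => f^[n] x) atTop (nhds (⨅ n, f^[n] x)) :=
    tendsto_atTop_ciInf hanti hbdd
  set L := ⨅ n, f^[n] x with hL
  have hL0 : 0 ≤ L := le_ciInf fun n => (hiter n).1
  have hLA : L < A := lt_of_le_of_lt (ciInf_le hbdd 0) hxA
  have hLb : L ∈ Icc (0:ℝ) b := ⟨hL0, ((hLA.trans hAb).le)⟩
  have hin : Tendsto (fun n => f^[n] x) atTop (nhdsWithin L (Icc (0:ℝ) b)) := by
    refine tendsto_nhdsWithin_of_tendsto_nhds_of_eventually_within _ htend ?_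
    exact Eventually.of_forall fun n => ⟨(hiter n).1, ((hiter n).2.trans hAb).le⟩
  have h1 : Tendsto (fun n => f (f^[n] x)) atTop (nhds (f L)) :=
    (hcont L hLb).tendsto.comp hin
  have h2 : Tendsto (fun n => f^[n+1] x) atTop (nhds L) :=
    htend.comp (tendsto_add_atTop_nat 1)
  have h1' : Tendsto (fun n => f^[n+1] x) atTop (nhds (f L)) := by
    simpa [Function.iterate_succ_apply'] using h1
  have hfix : f L = L := tendsto_nhds_unique h1' h2
  rcases eq_or_lt_of_le hL0 with h | h
  · rw [← h] at htend; exact htend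
  · exact absurd hfix (ne_of_lt (hlt L (Or.inl ⟨h, hLA⟩)))
end

section
/- Let f be a unimodal Allee map on [0,b] with threshold A, carrying capacity K, peak B and maximum M_f = f(B). Assume f is differentiable on (B, M_f) with |f'(x)| < 1 for every x ∈ (B, M_f). Then for every x ∈ (A, M_f], the sequence of iterates (f^[n](x))_{n≥0} converges to K. -/
open Filter Set Topology

/-- A strictly monotone function on an open interval which is continuous on the closed
interval is monotone on the closed interval. -/
lemma monoIcc_aux {f : ℝ → ℝ} {a c : ℝ} (hac : a < c)
    (hcont : ContinuousOn f (Icc a c)) (hm : StrictMonoOn f (Ioo a c)) :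
    MonotoneOn f (Icc a c) := by
  intro x hx y hy hxy
  rcases hxy.eq_or_lt with rfl | hlt
  · exact le_rfl
  have hxm : x < (x + y) / 2 := by linarith
  have hmy : (x + y) / 2 < y := by linarith
  set m := (x + y) / 2 with hmdef
  have hmIoo : m ∈ Ioo a c := ⟨hx.1.trans_lt hxm, hmy.trans_le hy.2⟩
  have h1 : f x ≤ f m := by
    rcases hx.1.eq_or_lt with heq | hax
    · -- x = a : use a right-limit argument
      have hne : (𝓝[Ioo x m] x).NeBot := by
        apply mem_closure_iff_nhdsWithin_neBot.mp
        rw [closure_Ioo hxm.ne]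
        exact ⟨le_rfl, hxm.le⟩
      have htd : Tendsto f (𝓝[Ioo x m] x) (nhds (f x)) :=
        (hcont x hx).mono_left
          (nhdsWithin_mono _ (fun t ht => ⟨(heq ▸ ht.1).le, ht.2.le.trans hmIoo.2.le⟩))
      apply le_of_tendsto htd
      filter_upwards [self_mem_nhdsWithin] with t ht
      exact (hm ⟨heq ▸ ht.1, ht.2.trans hmIoo.2⟩ hmIoo ht.2).le
    · exact (hm ⟨hax, hlt.trans_le hy.2⟩ hmIoo hxm).le
  have h2 : f m ≤ f y := by
    rcases hy.2.eq_or_lt with heq | hyc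
    · -- y = c : use a left-limit argument
      have hne : (𝓝[Ioo m y] y).NeBot := by
        apply mem_closure_iff_nhdsWithin_neBot.mp
        rw [closure_Ioo hmy.ne]
        exact ⟨hmy.le, le_rfl⟩
      have htd : Tendsto f (𝓝[Ioo m y] y) (nhds (f y)) :=
        (hcont y hy).mono_left
          (nhdsWithin_mono _ (fun t ht => ⟨hmIoo.1.le.trans ht.1.le, ht.2.le.trans heq.le⟩))
      apply ge_of_tendsto htd
      filter_upwards [self_mem_nhdsWithin] with t ht
      exact (hm hmIoo ⟨hmIoo.1.trans ht.1, heq ▸ ht.2⟩ ht.1).le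
    · exact (hm hmIoo ⟨hx.1.trans_lt (hxm.trans hmy), hyc⟩ hmy).le
  exact h1.trans h2

lemma antiIcc_aux {f : ℝ → ℝ} {a c : ℝ} (hac : a < c)
    (hcont : ContinuousOn f (Icc a c)) (hm : StrictAntiOn f (Ioo a c)) :
    AntitoneOn f (Icc a c) := by
  have h := monoIcc_aux hac hcont.neg (fun x hx y hy hxy => neg_lt_neg (hm hx hy hxy))
  intro x hx y hy hxy
  have := h hx hy hxy
  simpa using this

/-- Convergence to the fixed point for a strictly distance-decreasing self-map of a
compact subset of `ℝ`. -/
lemma key_conv (S : Set ℝ) (hScpt : IsCompact S) (f : ℝ → ℝ) (hmap : MapsTo f S S)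
    (hc : ContinuousOn f S) (K : ℝ) (hK : K ∈ S) (hfK : f K = K)
    (hcontr : ∀ x ∈ S, x ≠ K → |f x - K| < |x - K|) (x : ℝ) (hx : x ∈ S) :
    Tendsto (fun n => f^[n] x) atTop (nhds K) := by
  have hle : ∀ y ∈ S, |f y - K| ≤ |y - K| := by
    intro y hy
    by_cases h : y = K
    · simp [h, hfK]
    · exact (hcontr y hy h).le
  have hoS : ∀ n, f^[n] x ∈ S := fun n => hmap.iterate n hx
  have hsucc : ∀ n : ℕ, f^[n + 1] x = f (f^[n] x) := fun n =>
    Function.iterate_succ_apply' f n x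
  set d : ℕ → ℝ := fun n => |f^[n] x - K| with hd
  have hdanti : Antitone d := by
    apply antitone_nat_of_succ_le
    intro n
    show |f^[n + 1] x - K| ≤ |f^[n] x - K|
    rw [hsucc n]
    exact hle _ (hoS n)
  have hdnn : ∀ n, 0 ≤ d n := fun n => abs_nonneg _
  have hbdd : BddBelow (range d) := ⟨0, by rintro _ ⟨n, rfl⟩; exact hdnn n⟩
  have hdL : Tendsto d atTop (nhds (⨅ n, d n)) := tendsto_atTop_ciInf hdanti hbdd
  have hLd : ∀ n, (⨅ n, d n) ≤ d n := fun n => ciInf_le hbdd n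
  have hL0 : 0 ≤ ⨅ n, d n := le_ciInf hdnn
  rcases hL0.eq_or_lt with h0 | hpos
  · rw [tendsto_iff_dist_tendsto_zero]
    have : (fun n => dist (f^[n] x) K) = d := by
      funext n; rw [Real.dist_eq]
    rw [this, h0]
    exact hdL
  · exfalso
    set L := ⨅ n, d n with hLdef
    set T := S ∩ {y | L ≤ |y - K|} with hT
    have hTcl : IsClosed {y : ℝ | L ≤ |y - K|} :=
      isClosed_le continuous_const ((continuous_id.sub continuous_const).abs)
    have hTcpt : IsCompact T := hScpt.inter_right hTcl
    have hoT : ∀ n, f^[n] x ∈ T := fun n => ⟨hoS n, hLd n⟩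
    have hTne : T.Nonempty := ⟨x, by simpa using hoT 0⟩
    have hgc : ContinuousOn (fun y => |y - K| - |f y - K|) T := by
      apply ContinuousOn.sub
      · exact ((continuous_id.sub continuous_const).abs).continuousOn
      · exact ((hc.mono inter_subset_left).sub continuousOn_const).abs
    obtain ⟨y0, hy0T, hy0min'⟩ := hTcpt.exists_isMinOn hTne hgc
    have hy0min : ∀ y ∈ T, |y0 - K| - |f y0 - K| ≤ |y - K| - |f y - K| :=
      fun y hy => hy0min' hy
    have hy0ne : y0 ≠ K := by
      intro h
      have h2 := hy0T.2
      rw [h] at h2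
      simp at h2
      linarith
    have hε : 0 < |y0 - K| - |f y0 - K| := sub_pos.mpr (hcontr y0 hy0T.1 hy0ne)
    obtain ⟨n, hn⟩ := exists_lt_of_ciInf_lt
      (show (⨅ n, d n) < L + (|y0 - K| - |f y0 - K|) by rw [← hLdef]; linarith)
    have h1 : |y0 - K| - |f y0 - K| ≤ |f^[n] x - K| - |f (f^[n] x) - K| :=
      hy0min _ (hoT n)
    have h2 : L ≤ d (n + 1) := hLd (n + 1)
    have h3 : d (n + 1) = |f (f^[n] x) - K| := by
      show |f^[n + 1] x - K| = _
      rw [hsucc n]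
    have h4 : d n = |f^[n] x - K| := rfl
    linarith

theorem stmt15
    (b A K B : ℝ) (hb : 0 < b)
    (f : ℝ → ℝ) (hf : IsUnimodalAlleeMap b A K B f)
    -- `f` is differentiable with `|f'| < 1` on `(B, M_f)` where `M_f = f B`
    (hdiff : ∀ x ∈ Ioo B (f B), DifferentiableAt ℝ f x)
    (hder : ∀ x ∈ Ioo B (f B), |deriv f x| < 1) :
    ∀ x ∈ Ioc A (f B), Tendsto (fun n => f^[n] x) atTop (nhds K) := by
  obtain ⟨hA, hAK, hKb, hAB, hBK, hmap, hcont, hmono, hanti, hf0, hfA, hfK, hlt, hgt⟩ := hf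
  have hB0 : 0 < B := hA.trans hAB
  have hBb : B < b := hBK.trans_le hKb
  have hBmem : B ∈ Icc (0:ℝ) b := ⟨hB0.le, hBb.le⟩
  have hMmem : f B ∈ Icc (0:ℝ) b := hmap hBmem
  have hBM : B < f B := hgt B ⟨hAB, hBK⟩
  have hmonoI : MonotoneOn f (Icc 0 B) :=
    monoIcc_aux hB0 (hcont.mono (Icc_subset_Icc le_rfl hBb.le)) hmono
  have hantiI : AntitoneOn f (Icc B b) :=
    antiIcc_aux hBb (hcont.mono (Icc_subset_Icc hB0.le le_rfl)) hanti
  have hmax : ∀ y ∈ Icc (0:ℝ) b, f y ≤ f B := by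
    intro y hy
    rcases le_total y B with h | h
    · exact hmonoI ⟨hy.1, h⟩ ⟨hB0.le, le_rfl⟩ h
    · exact hantiI ⟨le_rfl, hBb.le⟩ ⟨h, hy.2⟩ h
  have hKM : K ≤ f B := by
    by_contra h
    push_neg at h
    have h1 : f B ∈ Ioo A K := ⟨hAB.trans hBM, h⟩
    have h2 := hgt _ h1
    have h3 := hmax (f B) hMmem
    linarith
  have hmvt : ∀ u v, B ≤ u → u < v → v ≤ f B → |f v - f u| < v - u := by
    intro u v hu huv hv
    have hsub1 : Icc u v ⊆ Icc 0 b := Icc_subset_Icc (hB0.le.trans hu) (hv.trans hMmem.2)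
    have hsub2 : Ioo u v ⊆ Ioo B (f B) := Ioo_subset_Ioo hu hv
    obtain ⟨c, hc, hceq⟩ := exists_hasDerivAt_eq_slope f (deriv f) huv (hcont.mono hsub1)
      (fun z hz => (hdiff z (hsub2 hz)).hasDerivAt)
    have h1 : |deriv f c| < 1 := hder c (hsub2 hc)
    have h2 : f v - f u = deriv f c * (v - u) := by
      rw [hceq, div_mul_cancel₀ _ (sub_ne_zero.mpr huv.ne')]
    have h3 : (0:ℝ) < v - u := sub_pos.mpr huv
    calc |f v - f u| = |deriv f c| * |v - u| := by rw [h2, abs_mul]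
      _ < 1 * |v - u| := by
          exact mul_lt_mul_of_pos_right h1 (abs_pos.mpr (sub_ne_zero.mpr huv.ne'))
      _ = v - u := by rw [one_mul, abs_of_pos h3]
  have hMK : f B - K < K - B := by
    have h1 := hmvt B K le_rfl hBK hKM
    rw [hfK] at h1
    have h2 : |K - f B| = f B - K := by
      rw [abs_sub_comm]
      exact abs_of_nonneg (by linarith)
    linarith [h2 ▸ h1]
  have hcontr : ∀ y ∈ Icc B (f B), y ≠ K → |f y - K| < |y - K| := by
    intro y hy hne
    rcases lt_or_gt_of_ne hne with h | h
    · have h1 := hmvt y K hy.1 h hKM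
      rw [hfK] at h1
      have h2 : |y - K| = K - y := by
        rw [abs_sub_comm]; exact abs_of_nonneg (by linarith)
      rw [h2, abs_sub_comm]
      exact h1
    · have h1 := hmvt K y hBK.le h hy.2
      rw [hfK] at h1
      have h2 : |y - K| = y - K := abs_of_nonneg (by linarith)
      rw [h2]
      exact h1
  have hSmap : MapsTo f (Icc B (f B)) (Icc B (f B)) := by
    intro y hy
    constructor
    · by_cases h : y = K
      · rw [h, hfK]; exact hBK.le
      · have h1 := hcontr y hy h
        have h2 : |y - K| ≤ K - B := by
          rcases le_total y K with h' | h'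
          · rw [abs_of_nonpos (by linarith)]
            have := hy.1
            linarith
          · rw [abs_of_nonneg (by linarith)]
            have := hy.2
            linarith
        have h3 := abs_lt.mp (lt_of_lt_of_le h1 h2)
        linarith [h3.1]
    · exact hmax y ⟨hB0.le.trans hy.1, hy.2.trans hMmem.2⟩
  have hSconv : ∀ y ∈ Icc B (f B), Tendsto (fun n => f^[n] y) atTop (nhds K) :=
    key_conv (Icc B (f B)) isCompact_Icc f hSmap
      (hcont.mono (Icc_subset_Icc hB0.le hMmem.2)) K ⟨hBK.le, hKM⟩ hfK hcontr
  have hinv : ∀ y ∈ Ioc A (f B), f y ∈ Ioc A (f B) := by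
    intro y hy
    refine ⟨?_, hmax y ⟨(hA.trans hy.1).le, hy.2.trans hMmem.2⟩⟩
    rcases le_or_gt y B with h | h
    · exact hy.1.trans (hgt y ⟨hy.1, h.trans_lt hBK⟩)
    · have := (hSmap ⟨h.le, hy.2⟩).1
      linarith
  intro x hx
  have horb : ∀ n, f^[n] x ∈ Ioc A (f B) := by
    intro n
    induction n with
    | zero => simpa using hx
    | succ n ih =>
      rw [Function.iterate_succ_apply']
      exact hinv _ ih
  by_cases hcase : ∃ n, B ≤ f^[n] x
  · obtain ⟨n, hn⟩ := hcase
    have h1 : f^[n] x ∈ Icc B (f B) := ⟨hn, (horb n).2⟩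
    have h2 := hSconv _ h1
    have h3 : Tendsto (fun m => f^[m + n] x) atTop (nhds K) := by
      have : (fun m => f^[m + n] x) = fun m => f^[m] (f^[n] x) := by
        funext m
        rw [Function.iterate_add_apply]
      rw [this]
      exact h2
    exact (tendsto_add_atTop_iff_nat n).mp h3
  · push_neg at hcase
    exfalso
    have hsucc : ∀ n : ℕ, f^[n + 1] x = f (f^[n] x) := fun n =>
      Function.iterate_succ_apply' f n x
    have hmono' : Monotone (fun n => f^[n] x) := by
      apply monotone_nat_of_le_succ
      intro n
      rw [hsucc n]
      exact (hgt (f^[n] x) ⟨(horb n).1, (hcase n).trans hBK⟩).le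
    have hbdd : BddAbove (range fun n => f^[n] x) :=
      ⟨B, by rintro _ ⟨n, rfl⟩; exact (hcase n).le⟩
    have hoL : Tendsto (fun n => f^[n] x) atTop (nhds (⨆ n, f^[n] x)) :=
      tendsto_atTop_ciSup hmono' hbdd
    set L := ⨆ n, f^[n] x with hLdef
    have hLB : L ≤ B := ciSup_le (fun n => (hcase n).le)
    have hLA : A < L := by
      have h0 : f^[0] x ≤ L := le_ciSup hbdd 0
      simp only [Function.iterate_zero_apply] at h0
      exact lt_of_lt_of_le hx.1 h0
    have hLIoo : L ∈ Ioo A K := ⟨hLA, lt_of_le_of_lt hLB hBK⟩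
    have hLnb : Icc (0:ℝ) b ∈ nhds L := Icc_mem_nhds (by linarith) (by linarith)
    have hcontL : ContinuousAt f L := hcont.continuousAt hLnb
    have h1 : Tendsto (fun n => f (f^[n] x)) atTop (nhds (f L)) :=
      hcontL.tendsto.comp hoL
    have h2 : Tendsto (fun n => f^[n + 1] x) atTop (nhds L) :=
      hoL.comp (tendsto_add_atTop_nat 1)
    have h3 : (fun n => f (f^[n] x)) = fun n => f^[n + 1] x :=
      funext fun n => (hsucc n).symm
    rw [h3] at h1
    have h4 := tendsto_nhds_unique h1 h2
    have h5 := hgt L hLIoo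
    linarith
end

section
/- Let f be a unimodal Allee map on [0, M_f] with threshold A, carrying capacity K, peak B and maximum M_f = f(B) (i.e., the domain endpoint b equals M_f). If f(M_f) > A, then for every x ∈ (A, M_f] and every n ∈ ℕ, the iterate f^[n](x) satisfies f^[n](x) > A. -/
open Filter Set

theorem AntitoneOn.apply_right_le_of_continuousWithinAt {α β : Type*} [LinearOrder α]
    [TopologicalSpace α] [OrderTopology α] [DenselyOrdered α] [Preorder β]
    [TopologicalSpace β] [OrderClosedTopology β] {f : α → β} {a b x : α}
    (hf : AntitoneOn f (Ioo a b)) (hc : ContinuousWithinAt f (Ioo a b) b) (hx : x ∈ Ioo a b) :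
    f b ≤ f x := by
  rw [ContinuousWithinAt, nhdsWithin_Ioo_eq_nhdsLT (hx.1.trans hx.2)] at hc
  have := nhdsLT_neBot_of_exists_lt ⟨x, hx.2⟩
  refine le_of_tendsto hc ?_
  filter_upwards [Ioo_mem_nhdsLT hx.2] with t ht
  exact hf hx ⟨hx.1.trans ht.1, ht.2⟩ ht.1.le

/-- Below `K` the population grows, while on `(K, f B]` the map decreases, so it stays above
its value `f (f B)` at the right endpoint; the upper bound is the invariance of `[0, f B]`. -/
theorem IsUnimodalAlleeMap.mapsTo_Ioc {A K B : ℝ} {f : ℝ → ℝ}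
    (hf : IsUnimodalAlleeMap (f B) A K B f) (hMA : A < f (f B)) :
    MapsTo f (Ioc A (f B)) (Ioc A (f B)) := by
  obtain ⟨hA, hAK, hKM, hAB, hBK, hmap, hcont, -, hanti, -, -, hfK, -, hgt⟩ := hf
  intro x hx
  refine ⟨?_, (hmap ⟨(hA.trans hx.1).le, hx.2⟩).2⟩
  rcases lt_trichotomy x K with hxK | rfl | hKx
  · exact hx.1.trans (hgt x ⟨hx.1, hxK⟩)
  · rwa [hfK]
  · rcases hx.2.lt_or_eq with hxM | rfl
    · have hcM : ContinuousWithinAt f (Ioo B (f B)) (f B) :=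
        (hcont _ ⟨(hA.trans hAK).le.trans hKM, le_rfl⟩).mono
          (Ioo_subset_Icc_self.trans (Icc_subset_Icc (hA.trans hAB).le le_rfl))
      exact hMA.trans_le <|
        hanti.antitoneOn.apply_right_le_of_continuousWithinAt hcM ⟨hBK.trans hKx, hxM⟩
    · exact hMA

theorem stmt16
    (A K B : ℝ)
    (f : ℝ → ℝ)
    -- `f` is a unimodal Allee map on `[0, M_f]`, i.e. the right endpoint is `M_f = f B`
    (hf : IsUnimodalAlleeMap (f B) A K B f)
    (hMA : A < f (f B)) :
    ∀ x ∈ Ioc A (f B), ∀ n : ℕ, A < f^[n] x :=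
  fun _ hx n ↦ ((hf.mapsTo_Ioc hMA).iterate n hx).1
end
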